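/- The function φ_0(x,y,z) = ∑_{j=1,2} (1/α_j)(y_j²/2 + W_j(x_j) + (x_j - z_j)²/2) satisfies the eikonal equation q_0(x,y,z, ∂_x φ_0, ∂_y φ_0, ∂_z φ_0) = 0, where q_0(x,y,z,ξ,η,ζ) = (γ/2)∑_{j=1,2} α_j(ζ_j² - (1/α_j²)(x_j - z_j)²) + y·ξ - (∂_x W_0(x) + x - z)·η, with W_0 = W_1 + W_2. -/

import Mathlib

open Real

/-- One block of variables: two groups of `n` real coordinates. -/
abbrev Blk (n : ℕ) := Fin 2 → Fin n → ℝ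

/-- Points `(x, y, z)` of `ℝ^{6n}`. -/
abbrev ChainSpace (n : ℕ) := Blk n × Blk n × Blk n

noncomputable def pdx {n : ℕ} (j : Fin 2) (i : Fin n) (u : ChainSpace n → ℝ)
    (p : ChainSpace n) : ℝ := fderiv ℝ u p (Pi.single j (Pi.single i 1), 0, 0)

noncomputable def pdy {n : ℕ} (j : Fin 2) (i : Fin n) (u : ChainSpace n → ℝ)
    (p : ChainSpace n) : ℝ := fderiv ℝ u p (0, Pi.single j (Pi.single i 1), 0)

noncomputable def pdz {n : ℕ} (j : Fin 2) (i : Fin n) (u : ChainSpace n → ℝ)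
    (p : ChainSpace n) : ℝ := fderiv ℝ u p (0, 0, Pi.single j (Pi.single i 1))

/-- Partial derivative `∂_{x_{j,i}} W` of the effective potential. -/
noncomputable def pdW {n : ℕ} (j : Fin 2) (i : Fin n) (W : Blk n → ℝ) (x : Blk n) : ℝ :=
  fderiv ℝ W x (Pi.single j (Pi.single i 1))

/-- The symbol
`q₀ = (γ/2)∑_j α_j(ζ_j² - (1/α_j²)(x_j-z_j)²) + y·ξ - (∂_xW₀ + x - z)·η`. -/
noncomputable def q0 {n : ℕ} (γ : ℝ) (α : Fin 2 → ℝ) (W₀ : Blk n → ℝ)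
    (x y z ξ η ζ : Blk n) : ℝ :=
  (γ / 2) * ∑ j, α j * ∑ i, ((ζ j i) ^ 2 - (1 / (α j) ^ 2) * (x j i - z j i) ^ 2)
    + ∑ j, ∑ i, y j i * ξ j i
    - ∑ j, ∑ i, (pdW j i W₀ x + x j i - z j i) * η j i

noncomputable def PX {n : ℕ} (j : Fin 2) : ChainSpace n →L[ℝ] (Fin n → ℝ) :=
  (ContinuousLinearMap.proj j).comp (ContinuousLinearMap.fst ℝ (Blk n) (Blk n × Blk n))

noncomputable def PYc {n : ℕ} (j : Fin 2) (i : Fin n) : ChainSpace n →L[ℝ] ℝ :=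
  (ContinuousLinearMap.proj i).comp ((ContinuousLinearMap.proj j).comp
    ((ContinuousLinearMap.fst ℝ (Blk n) (Blk n)).comp
      (ContinuousLinearMap.snd ℝ (Blk n) (Blk n × Blk n))))

noncomputable def PXc {n : ℕ} (j : Fin 2) (i : Fin n) : ChainSpace n →L[ℝ] ℝ :=
  (ContinuousLinearMap.proj i).comp (PX j)

noncomputable def PZc {n : ℕ} (j : Fin 2) (i : Fin n) : ChainSpace n →L[ℝ] ℝ :=
  (ContinuousLinearMap.proj i).comp ((ContinuousLinearMap.proj j).comp
    ((ContinuousLinearMap.snd ℝ (Blk n) (Blk n)).comp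
      (ContinuousLinearMap.snd ℝ (Blk n) (Blk n × Blk n))))

set_option maxHeartbeats 1000000 in
/-- `φ₀ = ∑_j (1/α_j)(y_j²/2 + W_j(x_j) + (x_j-z_j)²/2)` solves the
eikonal equation `q₀(x,y,z,∂_xφ₀,∂_yφ₀,∂_zφ₀) = 0`, with `W₀ = W₁ + W₂`. -/
theorem stmt11 {n : ℕ} (γ : ℝ) (hγ : 0 < γ) (α : Fin 2 → ℝ) (hα : ∀ j, 0 < α j)
    (Wc : Fin 2 → (Fin n → ℝ) → ℝ) (hWc : ∀ j, ContDiff ℝ (⊤ : ℕ∞) (Wc j))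
    (W₀ : Blk n → ℝ) (hW₀ : ∀ x : Blk n, W₀ x = ∑ j, Wc j (x j))
    (φ₀ : ChainSpace n → ℝ)
    (hφ₀ : ∀ p, φ₀ p = ∑ j, (1 / α j) * ((∑ i, (p.2.1 j i) ^ 2) / 2
        + Wc j (p.1 j) + (∑ i, (p.1 j i - p.2.2 j i) ^ 2) / 2)) :
    ∀ p : ChainSpace n,
      q0 γ α W₀ p.1 p.2.1 p.2.2
        (fun j i => pdx j i φ₀ p) (fun j i => pdy j i φ₀ p)
        (fun j i => pdz j i φ₀ p) = 0 := by
  have hφf : φ₀ = fun q : ChainSpace n => ∑ j, (1 / α j) * ((∑ i, (q.2.1 j i) ^ 2) / 2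
      + Wc j (q.1 j) + (∑ i, (q.1 j i - q.2.2 j i) ^ 2) / 2) := funext hφ₀
  have hWf : W₀ = fun x : Blk n => ∑ j, Wc j (x j) := funext hW₀
  subst hφf hWf
  intro p
  have hD0 := HasFDerivAt.fun_sum (u := Finset.univ) fun j _ =>
      ((((HasFDerivAt.fun_sum (u := Finset.univ) fun i _ =>
            (hasDerivAt_pow 2 (p.2.1 j i)).comp_hasFDerivAt p
              (PYc j i).hasFDerivAt).mul_const (2:ℝ)⁻¹).add
        ((((hWc j).differentiable (by simp) (p.1 j)).hasFDerivAt.comp p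
            (PX j).hasFDerivAt).add
          ((HasFDerivAt.fun_sum (u := Finset.univ) fun i _ =>
            (hasDerivAt_pow 2 (p.1 j i - p.2.2 j i)).comp_hasFDerivAt p
              ((PXc j i) - (PZc j i)).hasFDerivAt).mul_const (2:ℝ)⁻¹))).const_mul (1 / α j))
  have hD : HasFDerivAt (fun q : ChainSpace n => ∑ j, (1 / α j) * ((∑ i, (q.2.1 j i) ^ 2) / 2
      + Wc j (q.1 j) + (∑ i, (q.1 j i - q.2.2 j i) ^ 2) / 2)) _ p :=
    hD0.congr_of_eventuallyEq (Filter.Eventually.of_forall fun q => by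
      simp only [Function.comp_apply, Function.comp, PX, PYc, PXc, PZc,
        ContinuousLinearMap.comp_apply, ContinuousLinearMap.proj_apply,
        ContinuousLinearMap.coe_fst', ContinuousLinearMap.coe_snd',
        ContinuousLinearMap.sub_apply, ContinuousLinearMap.coe_comp',
        div_eq_mul_inv, Pi.add_apply]
      refine Finset.sum_congr rfl fun j _ => ?_
      ring)
  have hDW0 := HasFDerivAt.fun_sum (u := Finset.univ) fun j _ =>
      ((hWc j).differentiable (by simp) (p.1 j)).hasFDerivAt.comp p.1
        (ContinuousLinearMap.proj (R := ℝ) (φ := fun _ : Fin 2 => Fin n → ℝ) j).hasFDerivAt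
  have hDW : HasFDerivAt (fun x : Blk n => ∑ j, Wc j (x j)) _ p.1 :=
    hDW0.congr_of_eventuallyEq (Filter.Eventually.of_forall fun q => by
      simp [Function.comp])
  have hx : ∀ j i, pdx j i (fun q : ChainSpace n => ∑ j, (1 / α j) * ((∑ i, (q.2.1 j i) ^ 2) / 2
      + Wc j (q.1 j) + (∑ i, (q.1 j i - q.2.2 j i) ^ 2) / 2)) p
      = (α j)⁻¹ * ((fderiv ℝ (Wc j) (p.1 j)) (Pi.single i 1) + (p.1 j i - p.2.2 j i)) := by
    intro j i
    simp only [pdx]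
    rw [hD.fderiv]
    fin_cases j <;>
      · simp [PX, PYc, PXc, PZc, Pi.single_apply, Fin.sum_univ_two, Finset.sum_ite_eq,
          Finset.sum_ite_eq']
        try ring
  have hy : ∀ j i, pdy j i (fun q : ChainSpace n => ∑ j, (1 / α j) * ((∑ i, (q.2.1 j i) ^ 2) / 2
      + Wc j (q.1 j) + (∑ i, (q.1 j i - q.2.2 j i) ^ 2) / 2)) p
      = (α j)⁻¹ * p.2.1 j i := by
    intro j i
    simp only [pdy]
    rw [hD.fderiv]
    fin_cases j <;>
      · simp [PX, PYc, PXc, PZc, Pi.single_apply, Fin.sum_univ_two, Finset.sum_ite_eq,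
          Finset.sum_ite_eq']
        try ring
  have hz : ∀ j i, pdz j i (fun q : ChainSpace n => ∑ j, (1 / α j) * ((∑ i, (q.2.1 j i) ^ 2) / 2
      + Wc j (q.1 j) + (∑ i, (q.1 j i - q.2.2 j i) ^ 2) / 2)) p
      = -((α j)⁻¹ * (p.1 j i - p.2.2 j i)) := by
    intro j i
    simp only [pdz]
    rw [hD.fderiv]
    fin_cases j <;>
      · simp [PX, PYc, PXc, PZc, Pi.single_apply, Fin.sum_univ_two, Finset.sum_ite_eq,
          Finset.sum_ite_eq']
        try ring
  have hw : ∀ j i, pdW j i (fun x : Blk n => ∑ j, Wc j (x j)) p.1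
      = (fderiv ℝ (Wc j) (p.1 j)) (Pi.single i 1) := by
    intro j i
    simp only [pdW]
    rw [hDW.fderiv]
    fin_cases j <;> simp [Pi.single_apply, Fin.sum_univ_two]
  simp only [q0, hx, hy, hz, hw]
  have e1 : ∀ j : Fin 2, ∑ i, ((-((α j)⁻¹ * (p.1 j i - p.2.2 j i))) ^ 2
      - 1 / (α j) ^ 2 * (p.1 j i - p.2.2 j i) ^ 2) = 0 := fun j =>
    Finset.sum_eq_zero fun i _ => by
      have := (hα j).ne'
      field_simp
      ring
  simp only [e1, mul_zero, Finset.sum_const_zero, zero_add, add_zero]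
  rw [sub_eq_zero]
  exact Finset.sum_congr rfl fun j _ => Finset.sum_congr rfl fun i _ => by ring
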